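/- For any initial covector λ₀ = (u₀, v₀, w₀) with w₀ ≠ 0, the curve γ(t) = (x(t), y(t), z(t)) with x(t) = (v₀(cosh(w₀t) - 1) - u₀ sinh(w₀t))/w₀, y(t) = (v₀ sinh(w₀t) - u₀(cosh(w₀t) - 1))/w₀, z(t) = (u₀² - v₀²)(sinh(w₀t) - w₀t)/(2w₀²), together with h_X(t) = u₀ cosh(w₀t) - v₀ sinh(w₀t), h_Y(t) = v₀ cosh(w₀t) - u₀ sinh(w₀t), h_Z(t) = w₀, solves the Hamiltonian system ḣ_X = -h_Y h_Z, ḣ_Y = -h_X h_Z, ḣ_Z = 0, γ̇ = -h_X X(γ) + h_Y Y(γ), with γ(0) = (0,0,0) and (h_X, h_Y, h_Z)(0) = (u₀, v₀, w₀). -/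

import Mathlib

/-- X = ∂_x - (y/2)∂_z as a vector field on ℝ³. -/
noncomputable def Xvf (p : ℝ × ℝ × ℝ) : ℝ × ℝ × ℝ := (1, 0, -p.2.1 / 2)

/-- Y = ∂_y + (x/2)∂_z as a vector field on ℝ³. -/
noncomputable def Yvf (p : ℝ × ℝ × ℝ) : ℝ × ℝ × ℝ := (0, 1, p.1 / 2)

/-- h_X(t) = u₀ cosh(w₀ t) - v₀ sinh(w₀ t). -/
noncomputable def hXc (u₀ v₀ w₀ t : ℝ) : ℝ := u₀ * Real.cosh (w₀ * t) - v₀ * Real.sinh (w₀ * t)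

/-- h_Y(t) = v₀ cosh(w₀ t) - u₀ sinh(w₀ t). -/
noncomputable def hYc (u₀ v₀ w₀ t : ℝ) : ℝ := v₀ * Real.cosh (w₀ * t) - u₀ * Real.sinh (w₀ * t)

/-- h_Z(t) = w₀. -/
noncomputable def hZc (_u₀ _v₀ w₀ _t : ℝ) : ℝ := w₀

/-- The normal geodesic from the origin with initial covector (u₀, v₀, w₀), w₀ ≠ 0. -/
noncomputable def gam (u₀ v₀ w₀ t : ℝ) : ℝ × ℝ × ℝ :=
  ((v₀ * (Real.cosh (w₀ * t) - 1) - u₀ * Real.sinh (w₀ * t)) / w₀,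
   (v₀ * Real.sinh (w₀ * t) - u₀ * (Real.cosh (w₀ * t) - 1)) / w₀,
   (u₀ ^ 2 - v₀ ^ 2) * (Real.sinh (w₀ * t) - w₀ * t) / (2 * w₀ ^ 2))


open Real

theorem hasDerivAt_cosh_const_mul (a t : ℝ) :
    HasDerivAt (fun t => cosh (a * t)) (a * sinh (a * t)) t := by
  simpa [mul_comm] using ((hasDerivAt_id t).const_mul a).cosh

theorem hasDerivAt_sinh_const_mul (a t : ℝ) :
    HasDerivAt (fun t => sinh (a * t)) (a * cosh (a * t)) t := by
  simpa [mul_comm] using ((hasDerivAt_id t).const_mul a).sinh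

theorem neg_smul_Xvf_add_smul_Yvf (a b : ℝ) (p : ℝ × ℝ × ℝ) :
    (-a) • Xvf p + b • Yvf p = (-a, b, (a * p.2.1 + b * p.1) / 2) := by
  simp only [Xvf, Yvf, Prod.smul_mk, Prod.mk_add_mk, smul_eq_mul, Prod.mk.injEq]
  refine ⟨?_, ?_, ?_⟩ <;> ring

section

variable (u₀ v₀ : ℝ) {w₀ : ℝ}

theorem hasDerivAt_hXc (t : ℝ) : HasDerivAt (hXc u₀ v₀ w₀) (-(hYc u₀ v₀ w₀ t * w₀)) t := by
  refine (((hasDerivAt_cosh_const_mul w₀ t).const_mul u₀).sub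
    ((hasDerivAt_sinh_const_mul w₀ t).const_mul v₀)).congr_deriv ?_
  simp only [hYc]; ring

theorem hasDerivAt_hYc (t : ℝ) : HasDerivAt (hYc u₀ v₀ w₀) (-(hXc u₀ v₀ w₀ t * w₀)) t := by
  refine (((hasDerivAt_cosh_const_mul w₀ t).const_mul v₀).sub
    ((hasDerivAt_sinh_const_mul w₀ t).const_mul u₀)).congr_deriv ?_
  simp only [hXc]; ring

theorem hasDerivAt_gam (hw : w₀ ≠ 0) (t : ℝ) :
    HasDerivAt (gam u₀ v₀ w₀) (-hXc u₀ v₀ w₀ t, hYc u₀ v₀ w₀ t,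
      (hXc u₀ v₀ w₀ t * (gam u₀ v₀ w₀ t).2.1 + hYc u₀ v₀ w₀ t * (gam u₀ v₀ w₀ t).1) / 2) t := by
  have hc := hasDerivAt_cosh_const_mul w₀ t
  have hs := hasDerivAt_sinh_const_mul w₀ t
  have hx := (((hc.sub_const 1).const_mul v₀).sub (hs.const_mul u₀)).div_const w₀
  have hy := ((hs.const_mul v₀).sub ((hc.sub_const 1).const_mul u₀)).div_const w₀
  have hz := ((hs.sub ((hasDerivAt_id t).const_mul w₀)).const_mul (u₀ ^ 2 - v₀ ^ 2)).div_const
    (2 * w₀ ^ 2)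
  refine (hx.prodMk (hy.prodMk hz) : HasDerivAt (gam u₀ v₀ w₀) _ t).congr_deriv ?_
  simp only [gam, hXc, hYc, mul_one, Prod.mk.injEq]
  refine ⟨?_, ?_, ?_⟩
  · field_simp; ring
  · field_simp
  · -- the quadratic terms of h_X y + h_Y x collapse via cosh² - sinh² = 1
    field_simp
    linear_combination (u₀ ^ 2 - v₀ ^ 2) * cosh_sq_sub_sinh_sq (w₀ * t)

end

theorem geodesic_solves_hamiltonian_system (u₀ v₀ w₀ : ℝ) (hw : w₀ ≠ 0) :
    (∀ t, HasDerivAt (hXc u₀ v₀ w₀) (-(hYc u₀ v₀ w₀ t * hZc u₀ v₀ w₀ t)) t) ∧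
    (∀ t, HasDerivAt (hYc u₀ v₀ w₀) (-(hXc u₀ v₀ w₀ t * hZc u₀ v₀ w₀ t)) t) ∧
    (∀ t, HasDerivAt (hZc u₀ v₀ w₀) 0 t) ∧
    (∀ t, HasDerivAt (gam u₀ v₀ w₀)
      ((-(hXc u₀ v₀ w₀ t)) • Xvf (gam u₀ v₀ w₀ t) + (hYc u₀ v₀ w₀ t) • Yvf (gam u₀ v₀ w₀ t)) t) ∧
    gam u₀ v₀ w₀ 0 = ((0 : ℝ), (0 : ℝ), (0 : ℝ)) ∧
    hXc u₀ v₀ w₀ 0 = u₀ ∧ hYc u₀ v₀ w₀ 0 = v₀ ∧ hZc u₀ v₀ w₀ 0 = w₀ := by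
  refine ⟨hasDerivAt_hXc u₀ v₀, hasDerivAt_hYc u₀ v₀, fun t => hasDerivAt_const t w₀,
    fun t => ?_, by simp [gam], by simp [hXc], by simp [hYc], rfl⟩
  rw [neg_smul_Xvf_add_smul_Yvf]
  exact hasDerivAt_gam u₀ v₀ hw t
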